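/- Let α, β > 0 and define δ = α² − 3β², γ = 3α² − β², and B(t,x) = 2√2 · ∂ₓ arctan( β·sin(α(x + δt)) / (α·cosh(β(x + γt))) ). Then B is a smooth solution of the modified KdV equation ∂ₜu + ∂ₓ(∂ₓ²u + u³) = 0 on ℝ × ℝ. -/

import Mathlib

namespace MKdVAux

noncomputable section

/-- basic trig/hyperbolic atoms -/
def sa (α β t x : ℝ) : ℝ := Real.sin (α * (x + (α ^ 2 - 3 * β ^ 2) * t))
def ca (α β t x : ℝ) : ℝ := Real.cos (α * (x + (α ^ 2 - 3 * β ^ 2) * t))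
def sb (α β t x : ℝ) : ℝ := Real.sinh (β * (x + (3 * α ^ 2 - β ^ 2) * t))
def cb (α β t x : ℝ) : ℝ := Real.cosh (β * (x + (3 * α ^ 2 - β ^ 2) * t))

def N0 (α β t x : ℝ) : ℝ := α * (ca α β t x * cb α β t x) - β * (sa α β t x * sb α β t x)
def N1 (α β t x : ℝ) : ℝ := -((α ^ 2 + β ^ 2) * (sa α β t x * cb α β t x))
def N2 (α β t x : ℝ) : ℝ :=
  -((α ^ 2 + β ^ 2) * (α * (ca α β t x * cb α β t x) + β * (sa α β t x * sb α β t x)))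
def N3 (α β t x : ℝ) : ℝ :=
  (α ^ 2 + β ^ 2) * ((α ^ 2 - β ^ 2) * (sa α β t x * cb α β t x)
    - 2 * (α * β) * (ca α β t x * sb α β t x))
def P0 (α β t x : ℝ) : ℝ := α ^ 2 * cb α β t x ^ 2 + β ^ 2 * sa α β t x ^ 2
def P1 (α β t x : ℝ) : ℝ :=
  2 * (α * β) * (α * (sb α β t x * cb α β t x) + β * (sa α β t x * ca α β t x))
def P2 (α β t x : ℝ) : ℝ :=
  2 * (α ^ 2 * β ^ 2) * (cb α β t x ^ 2 + sb α β t x ^ 2 + ca α β t x ^ 2 - sa α β t x ^ 2)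
def P3 (α β t x : ℝ) : ℝ :=
  8 * (α ^ 2 * β ^ 3) * (sb α β t x * cb α β t x) - 8 * (α ^ 3 * β ^ 2) * (sa α β t x * ca α β t x)
def NT (α β t x : ℝ) : ℝ :=
  (α ^ 2 + β ^ 2) * (2 * (α * β) * (ca α β t x * sb α β t x)
    - (α ^ 2 - β ^ 2) * (sa α β t x * cb α β t x))
def PT (α β t x : ℝ) : ℝ :=
  2 * (α * β) * (α * ((3 * α ^ 2 - β ^ 2) * (sb α β t x * cb α β t x))
    + β * ((α ^ 2 - 3 * β ^ 2) * (sa α β t x * ca α β t x)))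

def num3 (α β t x : ℝ) : ℝ :=
  ((N3 α β t x * P0 α β t x + N2 α β t x * P1 α β t x - N1 α β t x * P2 α β t x
      - N0 α β t x * P3 α β t x) * P0 α β t x
    - (N2 α β t x * P0 α β t x - N0 α β t x * P2 α β t x) * P1 α β t x
    - 2 * ((N1 α β t x * P0 α β t x - N0 α β t x * P1 α β t x) * P2 α β t x)) * P0 α β t x
  - 3 * (((N2 α β t x * P0 α β t x - N0 α β t x * P2 α β t x) * P0 α β t x
      - 2 * ((N1 α β t x * P0 α β t x - N0 α β t x * P1 α β t x) * P1 α β t x)) * P1 α β t x)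

def F0 (α β t x : ℝ) : ℝ := Real.sqrt 2 * (2 * α * β) * (N0 α β t x / P0 α β t x)
def F1 (α β t x : ℝ) : ℝ :=
  Real.sqrt 2 * (2 * α * β) *
    ((N1 α β t x * P0 α β t x - N0 α β t x * P1 α β t x) / P0 α β t x ^ 2)
def F2 (α β t x : ℝ) : ℝ :=
  Real.sqrt 2 * (2 * α * β) *
    (((N2 α β t x * P0 α β t x - N0 α β t x * P2 α β t x) * P0 α β t x
      - 2 * ((N1 α β t x * P0 α β t x - N0 α β t x * P1 α β t x) * P1 α β t x)) / P0 α β t x ^ 3)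
def F3 (α β t x : ℝ) : ℝ :=
  Real.sqrt 2 * (2 * α * β) * (num3 α β t x / P0 α β t x ^ 4)
def FT (α β t x : ℝ) : ℝ :=
  Real.sqrt 2 * (2 * α * β) *
    ((NT α β t x * P0 α β t x - N0 α β t x * PT α β t x) / P0 α β t x ^ 2)

theorem hda_congr {f : ℝ → ℝ} {d d' x : ℝ} (h : HasDerivAt f d x) (e : d' = d) :
    HasDerivAt f d' x := e ▸ h

theorem hasDerivAt_lin1 (k m x : ℝ) : HasDerivAt (fun y : ℝ => k * (y + m)) k x := by
  simpa using ((hasDerivAt_id x).add_const m).const_mul k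

theorem hasDerivAt_lin2 (k m x0 t : ℝ) :
    HasDerivAt (fun s : ℝ => k * (x0 + m * s)) (k * m) t := by
  simpa using (((hasDerivAt_id t).const_mul m).const_add x0).const_mul k

theorem P0_pos (α β t x : ℝ) (hα : α ≠ 0) : 0 < P0 α β t x := by
  have h1 : 0 < α ^ 2 := lt_of_le_of_ne (sq_nonneg α) (Ne.symm (pow_ne_zero 2 hα))
  have h2 : 0 < cb α β t x ^ 2 := pow_pos (by simp only [cb]; exact Real.cosh_pos _) 2
  have h3 : 0 ≤ β ^ 2 * sa α β t x ^ 2 := by positivity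
  have := mul_pos h1 h2
  simp only [P0]
  linarith

theorem hsa (α β t x : ℝ) : HasDerivAt (fun y => sa α β t y) (α * ca α β t x) x :=
  hda_congr ((hasDerivAt_lin1 α ((α ^ 2 - 3 * β ^ 2) * t) x).sin)
    (by simp only [ca]; ring)

theorem hca (α β t x : ℝ) : HasDerivAt (fun y => ca α β t y) (-(α * sa α β t x)) x :=
  hda_congr ((hasDerivAt_lin1 α ((α ^ 2 - 3 * β ^ 2) * t) x).cos)
    (by simp only [sa]; ring)

theorem hsb (α β t x : ℝ) : HasDerivAt (fun y => sb α β t y) (β * cb α β t x) x :=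
  hda_congr ((hasDerivAt_lin1 β ((3 * α ^ 2 - β ^ 2) * t) x).sinh)
    (by simp only [cb]; ring)

theorem hcb (α β t x : ℝ) : HasDerivAt (fun y => cb α β t y) (β * sb α β t x) x :=
  hda_congr ((hasDerivAt_lin1 β ((3 * α ^ 2 - β ^ 2) * t) x).cosh)
    (by simp only [sb]; ring)

theorem hsaT (α β t x : ℝ) :
    HasDerivAt (fun s => sa α β s x) (α * (α ^ 2 - 3 * β ^ 2) * ca α β t x) t :=
  hda_congr ((hasDerivAt_lin2 α (α ^ 2 - 3 * β ^ 2) x t).sin) (by simp only [ca]; ring)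

theorem hcaT (α β t x : ℝ) :
    HasDerivAt (fun s => ca α β s x) (-(α * (α ^ 2 - 3 * β ^ 2) * sa α β t x)) t :=
  hda_congr ((hasDerivAt_lin2 α (α ^ 2 - 3 * β ^ 2) x t).cos) (by simp only [sa]; ring)

theorem hsbT (α β t x : ℝ) :
    HasDerivAt (fun s => sb α β s x) (β * (3 * α ^ 2 - β ^ 2) * cb α β t x) t :=
  hda_congr ((hasDerivAt_lin2 β (3 * α ^ 2 - β ^ 2) x t).sinh) (by simp only [cb]; ring)

theorem hcbT (α β t x : ℝ) :
    HasDerivAt (fun s => cb α β s x) (β * (3 * α ^ 2 - β ^ 2) * sb α β t x) t :=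
  hda_congr ((hasDerivAt_lin2 β (3 * α ^ 2 - β ^ 2) x t).cosh) (by simp only [sb]; ring)

theorem hN0 (α β t x : ℝ) : HasDerivAt (fun y => N0 α β t y) (N1 α β t x) x :=
  hda_congr ((((hca α β t x).mul (hcb α β t x)).const_mul α).sub
      (((hsa α β t x).mul (hsb α β t x)).const_mul β))
    (by simp only [N1]; ring)

theorem hN1 (α β t x : ℝ) : HasDerivAt (fun y => N1 α β t y) (N2 α β t x) x :=
  hda_congr ((((hsa α β t x).mul (hcb α β t x)).const_mul (α ^ 2 + β ^ 2)).neg)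
    (by simp only [N2]; ring)

theorem hN2 (α β t x : ℝ) : HasDerivAt (fun y => N2 α β t y) (N3 α β t x) x :=
  hda_congr (((((hca α β t x).mul (hcb α β t x)).const_mul α).add
        (((hsa α β t x).mul (hsb α β t x)).const_mul β)).const_mul (α ^ 2 + β ^ 2)).neg
    (by simp only [N3]; ring)

theorem hP0 (α β t x : ℝ) : HasDerivAt (fun y => P0 α β t y) (P1 α β t x) x :=
  hda_congr ((((hcb α β t x).pow 2).const_mul (α ^ 2)).add
      (((hsa α β t x).pow 2).const_mul (β ^ 2)))
    (by simp only [P1]; push_cast; ring)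

theorem hP1 (α β t x : ℝ) : HasDerivAt (fun y => P1 α β t y) (P2 α β t x) x :=
  hda_congr (((((hsb α β t x).mul (hcb α β t x)).const_mul α).add
      (((hsa α β t x).mul (hca α β t x)).const_mul β)).const_mul (2 * (α * β)))
    (by simp only [P2]; ring)

theorem hP2 (α β t x : ℝ) : HasDerivAt (fun y => P2 α β t y) (P3 α β t x) x :=
  hda_congr (((((hcb α β t x).pow 2).add ((hsb α β t x).pow 2)).add
        ((hca α β t x).pow 2)).sub ((hsa α β t x).pow 2) |>.const_mul (2 * (α ^ 2 * β ^ 2)))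
    (by simp only [P3]; push_cast; ring)

theorem hN0T (α β t x : ℝ) : HasDerivAt (fun s => N0 α β s x) (NT α β t x) t :=
  hda_congr ((((hcaT α β t x).mul (hcbT α β t x)).const_mul α).sub
      (((hsaT α β t x).mul (hsbT α β t x)).const_mul β))
    (by simp only [NT]; ring)

theorem hP0T (α β t x : ℝ) : HasDerivAt (fun s => P0 α β s x) (PT α β t x) t :=
  hda_congr ((((hcbT α β t x).pow 2).const_mul (α ^ 2)).add
      (((hsaT α β t x).pow 2).const_mul (β ^ 2)))
    (by simp only [PT]; push_cast; ring)

theorem hF0x (α β t x : ℝ) (hα : α ≠ 0) :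
    HasDerivAt (fun y => F0 α β t y) (F1 α β t x) x := by
  have hP := (P0_pos α β t x hα).ne'
  exact hda_congr (((hN0 α β t x).div (hP0 α β t x) hP).const_mul (Real.sqrt 2 * (2 * α * β)))
    (by simp only [F1])

theorem hF1x (α β t x : ℝ) (hα : α ≠ 0) :
    HasDerivAt (fun y => F1 α β t y) (F2 α β t x) x := by
  have hP := (P0_pos α β t x hα).ne'
  have hZ := ((hN1 α β t x).mul (hP0 α β t x)).sub ((hN0 α β t x).mul (hP1 α β t x))
  exact hda_congr ((hZ.div ((hP0 α β t x).pow 2) (pow_ne_zero 2 hP)).const_mul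
      (Real.sqrt 2 * (2 * α * β)))
    (by
      simp only [F2]
      refine congrArg (fun z => Real.sqrt 2 * (2 * α * β) * z) ?_
      simp only [Pi.pow_apply, Pi.mul_apply, Pi.sub_apply]
      rw [div_eq_div_iff (pow_ne_zero 3 hP) (pow_ne_zero 2 (pow_ne_zero 2 hP))]
      push_cast
      ring)

theorem hF2x (α β t x : ℝ) (hα : α ≠ 0) :
    HasDerivAt (fun y => F2 α β t y) (F3 α β t x) x := by
  have hP := (P0_pos α β t x hα).ne'
  have hZ := ((hN1 α β t x).mul (hP0 α β t x)).sub ((hN0 α β t x).mul (hP1 α β t x))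
  have hW := ((hN2 α β t x).mul (hP0 α β t x)).sub ((hN0 α β t x).mul (hP2 α β t x))
  have hV := (hW.mul (hP0 α β t x)).sub ((hZ.mul (hP1 α β t x)).const_mul 2)
  exact hda_congr ((hV.div ((hP0 α β t x).pow 3) (pow_ne_zero 3 hP)).const_mul
      (Real.sqrt 2 * (2 * α * β)))
    (by
      simp only [F3, num3]
      refine congrArg (fun z => Real.sqrt 2 * (2 * α * β) * z) ?_
      simp only [Pi.pow_apply, Pi.mul_apply, Pi.sub_apply]
      rw [div_eq_div_iff (pow_ne_zero 4 hP) (pow_ne_zero 2 (pow_ne_zero 3 hP))]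
      push_cast
      ring)

theorem hF0t (α β t x : ℝ) (hα : α ≠ 0) :
    HasDerivAt (fun s => F0 α β s x) (FT α β t x) t := by
  have hP := (P0_pos α β t x hα).ne'
  exact hda_congr (((hN0T α β t x).div (hP0T α β t x) hP).const_mul (Real.sqrt 2 * (2 * α * β)))
    (by simp only [FT])

set_option maxHeartbeats 2000000 in
/-- the core algebraic identity behind the mKdV equation for the breather -/
theorem key_alg (α β s c sh ch : ℝ) (h1 : s ^ 2 + c ^ 2 = 1) (h2 : ch ^ 2 - sh ^ 2 = 1) :
    -6 * s ^ 7 * ch * α ^ 4 * β ^ 6 - 6 * s ^ 7 * ch * α ^ 2 * β ^ 8 + 24 * s ^ 6 * c * sh * α ^ 3 * β ^ 7 - 30 * s ^ 5 * c ^ 2 * ch * α ^ 4 * β ^ 6 - 6 * s ^ 5 * c ^ 2 * ch * α ^ 2 * β ^ 8 + 18 * s ^ 5 * sh ^ 2 * ch * α ^ 4 * β ^ 6 - 6 * s ^ 5 * sh ^ 2 * ch * α ^ 2 * β ^ 8 - 12 * s ^ 5 * ch ^ 3 * α ^ 6 * β ^ 4 - 6 * s ^ 5 * ch ^ 3 *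 α ^ 4 * β ^ 6 + 6 * s ^ 5 * ch ^ 3 * α ^ 2 * β ^ 8 + 24 * s ^ 4 * c ^ 3 * sh * α ^ 3 * β ^ 7 + 24 * s ^ 4 * c * sh ^ 3 * α ^ 3 * β ^ 7 - 24 * s ^ 4 * c * sh * ch ^ 2 * α ^ 3 * β ^ 7 - 24 * s ^ 3 * c ^ 4 * ch * α ^ 4 * β ^ 6 - 36 * s ^ 3 * c ^ 2 * ch ^ 3 * α ^ 6 * β ^ 4 + 12 * s ^ 3 * c ^ 2 * ch ^ 3 * α ^ 4 * β ^ 6 + 24 * s ^ 3 * sh ^ 4 * ch * α ^ 4 * β ^ 6 + 12 * s ^ 3 * sh ^ 2 * ch ^ 3 * α ^ 6 * β ^ 4 - 36 * s ^ 3 * sh ^ 2 * ch ^ 3 * α ^ 4 * β ^ 6 - 6 * s ^ 3 * ch ^ 5 * α ^ 8 * β ^ 2 + 6 * s ^ 3 * ch ^ 5 * α ^ 6 * β ^ 4 + 12 * s ^ 3 * ch ^ 5 * α ^ 4 * β ^ 6 - 24 * s ^ 2 * c * sh * ch ^ 4 * α ^ 7 * β ^ 3 - 24 * s * c ^ 4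 * ch ^ 3 * α ^ 6 * β ^ 4 - 6 * s * c ^ 2 * ch ^ 5 * α ^ 8 * β ^ 2 + 18 * s * c ^ 2 * ch ^ 5 * α ^ 6 * β ^ 4 + 24 * s * sh ^ 4 * ch ^ 3 * α ^ 6 * β ^ 4 - 6 * s * sh ^ 2 * ch ^ 5 * α ^ 8 * β ^ 2 - 30 * s * sh ^ 2 * ch ^ 5 * α ^ 6 * β ^ 4 + 6 * s * ch ^ 7 * α ^ 8 * β ^ 2 + 6 * s * ch ^ 7 * α ^ 6 * β ^ 4 - 24 * c ^ 3 * sh * ch ^ 4 * α ^ 7 * β ^ 3 - 24 * c * sh ^ 3 * ch ^ 4 * α ^ 7 * β ^ 3 + 24 * c * sh * ch ^ 6 * α ^ 7 * β ^ 3 = 0 := by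
  linear_combination
    (-6 * s ^ 5 * ch * α ^ 4 * β ^ 6 - 6 * s ^ 5 * ch * α ^ 2 * β ^ 8 + 24 * s ^ 4 * c * sh * α ^ 3 * β ^ 7 - 24 * s ^ 3 * c ^ 2 * ch * α ^ 4 * β ^ 6 - 12 * s ^ 3 * ch ^ 3 * α ^ 6 * β ^ 4 + 12 * s ^ 3 * ch ^ 3 * α ^ 4 * β ^ 6 - 24 * s ^ 3 * ch * α ^ 4 * β ^ 6 - 24 * s * c ^ 2 * ch ^ 3 * α ^ 6 * β ^ 4 - 6 * s * ch ^ 5 * α ^ 8 * β ^ 2 + 18 * s * ch ^ 5 * α ^ 6 * β ^ 4 - 24 * s * ch ^ 3 * α ^ 6 * β ^ 4 - 24 * c * sh * ch ^ 4 * α ^ 7 * β ^ 3) * h1 +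
    (-18 * s ^ 5 * ch * α ^ 4 * β ^ 6 + 6 * s ^ 5 * ch * α ^ 2 * β ^ 8 - 24 * s ^ 4 * c * sh * α ^ 3 * β ^ 7 - 24 * s ^ 3 * sh ^ 2 * ch * α ^ 4 * β ^ 6 - 12 * s ^ 3 * ch ^ 3 * α ^ 6 * β ^ 4 + 12 * s ^ 3 * ch ^ 3 * α ^ 4 * β ^ 6 + 24 * s ^ 3 * ch * α ^ 4 * β ^ 6 - 24 * s * sh ^ 2 * ch ^ 3 * α ^ 6 * β ^ 4 + 6 * s * ch ^ 5 * α ^ 8 * β ^ 2 + 6 * s * ch ^ 5 * α ^ 6 * β ^ 4 + 24 * s * ch ^ 3 * α ^ 6 * β ^ 4 + 24 * c * sh * ch ^ 4 * α ^ 7 * β ^ 3) * h2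

theorem frac_combine (r a b nt n0 pt p0 n1 p1 nm3 : ℝ) (hP : p0 ≠ 0) (hr : r ^ 2 = 2)
    (hz : (nt * p0 - n0 * pt) * p0 ^ 2 + nm3 +
      2 * 3 * (2 * a * b) ^ 2 * (n0 ^ 2 * (n1 * p0 - n0 * p1)) = 0) :
    r * (2 * a * b) * ((nt * p0 - n0 * pt) / p0 ^ 2) + r * (2 * a * b) * (nm3 / p0 ^ 4) +
      3 * (r * (2 * a * b) * (n0 / p0)) ^ 2 * (r * (2 * a * b) * ((n1 * p0 - n0 * p1) / p0 ^ 2))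
      = 0 := by
  rw [show r * (2 * a * b) * ((nt * p0 - n0 * pt) / p0 ^ 2) + r * (2 * a * b) * (nm3 / p0 ^ 4) +
      3 * (r * (2 * a * b) * (n0 / p0)) ^ 2 * (r * (2 * a * b) * ((n1 * p0 - n0 * p1) / p0 ^ 2))
      = r * (2 * a * b) * ((nt * p0 - n0 * pt) * p0 ^ 2 + nm3 +
          r ^ 2 * 3 * (2 * a * b) ^ 2 * (n0 ^ 2 * (n1 * p0 - n0 * p1))) / p0 ^ 4 from by
    field_simp]
  rw [hr, hz, mul_zero, zero_div]

set_option maxHeartbeats 2000000 in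
theorem pde_identity (α β t x : ℝ) (hα : α ≠ 0) :
    FT α β t x + F3 α β t x + 3 * F0 α β t x ^ 2 * F1 α β t x = 0 := by
  have hP := (P0_pos α β t x hα).ne'
  have hr : Real.sqrt 2 ^ 2 = 2 := Real.sq_sqrt (by norm_num)
  have h1 : sa α β t x ^ 2 + ca α β t x ^ 2 = 1 := by
    simp only [sa, ca]; exact Real.sin_sq_add_cos_sq _
  have h2 : cb α β t x ^ 2 - sb α β t x ^ 2 = 1 := by
    simp only [sb, cb]; exact Real.cosh_sq_sub_sinh_sq _
  have key := key_alg α β (sa α β t x) (ca α β t x) (sb α β t x) (cb α β t x) h1 h2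
  have hz : (NT α β t x * P0 α β t x - N0 α β t x * PT α β t x) * P0 α β t x ^ 2
      + num3 α β t x
      + 2 * 3 * (2 * α * β) ^ 2 *
        (N0 α β t x ^ 2 * (N1 α β t x * P0 α β t x - N0 α β t x * P1 α β t x)) = 0 := by
    simp only [NT, PT, N0, N1, N2, N3, P0, P1, P2, P3, num3]
    linear_combination key
  simp only [FT, F3, F0, F1]
  exact frac_combine (Real.sqrt 2) α β (NT α β t x) (N0 α β t x) (PT α β t x) (P0 α β t x)
    (N1 α β t x) (P1 α β t x) (num3 α β t x) hP hr hz

theorem B_closed (α β : ℝ) (hα : 0 < α) (t x : ℝ) :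
    deriv (fun y => Real.arctan (β * Real.sin (α * (y + (α ^ 2 - 3 * β ^ 2) * t)) /
        (α * Real.cosh (β * (y + (3 * α ^ 2 - β ^ 2) * t))))) x
      = α * β * (N0 α β t x / P0 α β t x) := by
  have hc : (0:ℝ) < Real.cosh (β * (x + (3 * α ^ 2 - β ^ 2) * t)) := Real.cosh_pos _
  have hden : α * Real.cosh (β * (x + (3 * α ^ 2 - β ^ 2) * t)) ≠ 0 := (mul_pos hα hc).ne'
  have hnum : HasDerivAt (fun y => β * Real.sin (α * (y + (α ^ 2 - 3 * β ^ 2) * t)))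
      (β * (α * ca α β t x)) x := (hsa α β t x).const_mul β
  have hd2 : HasDerivAt (fun y => α * Real.cosh (β * (y + (3 * α ^ 2 - β ^ 2) * t)))
      (α * (β * sb α β t x)) x := (hcb α β t x).const_mul α
  have hu := (hnum.div hd2 hden).arctan
  simp only [Pi.div_apply] at hu
  rw [hu.deriv]
  have hP := (P0_pos α β t x hα.ne').ne'
  simp only [P0, sa, cb] at hP
  have hone : (1 : ℝ) + (β * Real.sin (α * (x + (α ^ 2 - 3 * β ^ 2) * t)) /
      (α * Real.cosh (β * (x + (3 * α ^ 2 - β ^ 2) * t)))) ^ 2 ≠ 0 := by positivity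
  simp only [N0, P0, sa, ca, sb, cb]
  field_simp

theorem contDiff_F0 (α β : ℝ) (hα : α ≠ 0) :
    ContDiff ℝ (⊤ : ℕ∞) (fun q : ℝ × ℝ => F0 α β q.1 q.2) := by
  have h : ∀ q : ℝ × ℝ,
      α ^ 2 * Real.cosh (β * (q.2 + (3 * α ^ 2 - β ^ 2) * q.1)) ^ 2 +
        β ^ 2 * Real.sin (α * (q.2 + (α ^ 2 - 3 * β ^ 2) * q.1)) ^ 2 ≠ 0 := by
    intro q
    have := (P0_pos α β q.1 q.2 hα).ne'
    simpa only [P0, sa, cb] using this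
  have l1 : ContDiff ℝ (⊤ : ℕ∞) (fun q : ℝ × ℝ => α * (q.2 + (α ^ 2 - 3 * β ^ 2) * q.1)) :=
    contDiff_const.mul (contDiff_snd.add (contDiff_const.mul contDiff_fst))
  have l2 : ContDiff ℝ (⊤ : ℕ∞) (fun q : ℝ × ℝ => β * (q.2 + (3 * α ^ 2 - β ^ 2) * q.1)) :=
    contDiff_const.mul (contDiff_snd.add (contDiff_const.mul contDiff_fst))
  simp only [F0, N0, P0, sa, ca, sb, cb]
  exact contDiff_const.mul (ContDiff.div
    ((contDiff_const.mul (l1.cos.mul l2.cosh)).sub (contDiff_const.mul (l1.sin.mul l2.sinh)))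
    ((contDiff_const.mul (l2.cosh.pow 2)).add (contDiff_const.mul (l1.sin.pow 2)))
    h)

end

end MKdVAux

/-- The mKdV breather: for `α, β > 0`, with `δ = α² - 3β²`, `γ = 3α² - β²`,
`B t x = 2√2 ∂ₓ arctan (β sin (α(x+δt)) / (α cosh (β(x+γt))))` is a smooth solution
of `∂ₜ u + ∂ₓ(∂ₓ² u + u³) = 0`. -/
theorem mkdv_breather (α β : ℝ) (hα : 0 < α) (hβ : 0 < β) :
    let δ : ℝ := α ^ 2 - 3 * β ^ 2
    let γ : ℝ := 3 * α ^ 2 - β ^ 2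
    let B : ℝ → ℝ → ℝ := fun t x =>
      2 * Real.sqrt 2 *
        deriv (fun y =>
          Real.arctan (β * Real.sin (α * (y + δ * t)) / (α * Real.cosh (β * (y + γ * t))))) x
    ContDiff ℝ (⊤ : ℕ∞) (fun q : ℝ × ℝ => B q.1 q.2) ∧
      ∀ t x : ℝ,
        deriv (fun s => B s x) t +
          deriv (fun y => deriv (deriv (B t)) y + B t y ^ 3) x = 0 := by
  intro δ γ B
  have hα' : α ≠ 0 := hα.ne'
  have hB : ∀ t x, B t x = MKdVAux.F0 α β t x := by
    intro t x
    show 2 * Real.sqrt 2 *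
        deriv (fun y => Real.arctan (β * Real.sin (α * (y + (α ^ 2 - 3 * β ^ 2) * t)) /
          (α * Real.cosh (β * (y + (3 * α ^ 2 - β ^ 2) * t))))) x = MKdVAux.F0 α β t x
    rw [MKdVAux.B_closed α β hα t x]
    simp only [MKdVAux.F0]
    ring
  constructor
  · have e0 : (fun q : ℝ × ℝ => B q.1 q.2) = fun q => MKdVAux.F0 α β q.1 q.2 :=
      funext fun q => hB q.1 q.2
    rw [e0]
    exact MKdVAux.contDiff_F0 α β hα'
  · intro t x
    have e1 : (fun s => B s x) = fun s => MKdVAux.F0 α β s x := funext fun s => hB s x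
    have e2 : B t = fun y => MKdVAux.F0 α β t y := funext fun y => hB t y
    have d1 : deriv (fun y => MKdVAux.F0 α β t y) = fun y => MKdVAux.F1 α β t y :=
      funext fun y => (MKdVAux.hF0x α β t y hα').deriv
    have d2 : deriv (fun y => MKdVAux.F1 α β t y) = fun y => MKdVAux.F2 α β t y :=
      funext fun y => (MKdVAux.hF1x α β t y hα').deriv
    have d3 : HasDerivAt (fun y => MKdVAux.F2 α β t y + MKdVAux.F0 α β t y ^ 3)
        (MKdVAux.F3 α β t x + 3 * MKdVAux.F0 α β t x ^ 2 * MKdVAux.F1 α β t x) x :=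
      MKdVAux.hda_congr ((MKdVAux.hF2x α β t x hα').add ((MKdVAux.hF0x α β t x hα').pow 3))
        (by push_cast; norm_num)
    simp only [e1, e2, d1, d2]
    rw [(MKdVAux.hF0t α β t x hα').deriv, d3.deriv]
    linarith [MKdVAux.pde_identity α β t x hα']
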